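/- Let G be a finite connected simple graph and let H be a connected induced subgraph of G such that every edge of G incident to a vertex of H is a cut-edge (bridge) of G. Then every vertex of H either has degree 1 in G, or belongs to no minimum MEG-set of G. -/

import Mathlib

open SimpleGraph

/-- A pair of vertices `u`, `v` monitors an edge `e` if `u` and `v` are reachable from
each other and `e` belongs to every shortest path (walk of length `G.dist u v`)
between `u` and `v`. -/
def Monitors {V : Type*} (G : SimpleGraph V) (u v : V) (e : Sym2 V) : Prop :=
  G.Reachable u v ∧ ∀ p : G.Walk u v, p.length = G.dist u v → e ∈ p.edges

/-- A monitoring edge-geodetic set of `G`: every edge of `G` is monitored by some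
pair of vertices of `M`. -/
def IsMEGSet {V : Type*} (G : SimpleGraph V) (M : Set V) : Prop :=
  ∀ e ∈ G.edgeSet, ∃ u ∈ M, ∃ v ∈ M, Monitors G u v e

/-- The monitoring edge-geodetic number of `G`: the minimum size of an MEG-set. -/
noncomputable def meg {V : Type*} [Fintype V] (G : SimpleGraph V) : ℕ :=
  sInf {n : ℕ | ∃ M : Finset V, IsMEGSet G ↑M ∧ M.card = n}

/-!
A vertex `v` of degree at least two all of whose edges are bridges is redundant in every
MEG-set `M`. Suppose `v` monitors an edge together with `u`, and let `w` be a neighbour of `v`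
off a shortest `v`–`u` path. The bridge `vw` is monitored by a pair from `M`, so one vertex `b`
of that pair lies on the far side of `vw`; then every `b`–`u` walk passes through `v`, so a
shortest one is a shortest `b`–`v` walk followed by a shortest `v`–`u` walk, and `b`, `u` monitor
the same edge. Hence `M \ {v}` is still an MEG-set.
-/

section

variable {V : Type*} {G : SimpleGraph V} {u v w a b c : V} {e : Sym2 V}

namespace Monitors

lemma symm (h : Monitors G u v e) : Monitors G v u e := by
  refine ⟨h.1.symm, fun p hp => ?_⟩
  simpa using h.2 p.reverse (by rw [Walk.length_reverse, hp, dist_comm])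

lemma ne (h : Monitors G u v e) : u ≠ v := by
  rintro rfl
  simpa using h.2 Walk.nil (by simp)

lemma of_forall_mem_support (h : Monitors G v u e) (hbv : G.Reachable b v)
    (hsep : ∀ p : G.Walk b u, v ∈ p.support) : Monitors G b u e := by
  classical
  refine ⟨hbv.trans h.1, fun p hp => ?_⟩
  have hv := hsep p
  have hsplit : (p.takeUntil v hv).length + (p.dropUntil v hv).length = p.length := by
    rw [← Walk.length_append, p.take_spec hv]
  have hfirst : G.dist b v ≤ (p.takeUntil v hv).length := dist_le _
  have hsecond : G.dist v u ≤ (p.dropUntil v hv).length := dist_le _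
  have htri : G.dist b u ≤ G.dist b v + G.dist v u := hbv.dist_triangle_left u
  have hgeod : (p.dropUntil v hv).length = G.dist v u := by omega
  exact p.edges_dropUntil_subset_edges hv (h.2 _ hgeod)

lemma reachable_deleteEdges (h : Monitors G a c s(v, w)) :
    (G.deleteEdges {s(v, w)}).Reachable a w ∨ (G.deleteEdges {s(v, w)}).Reachable c w := by
  obtain ⟨p, hp⟩ := h.1.exists_walk_length_eq_dist
  by_contra! hfar
  exact (p.isPath_of_length_eq_dist hp).isTrail.not_mem_edges_of_not_reachable
    hfar.1 hfar.2 (h.2 p hp)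

end Monitors

lemma IsMEGSet.exists_monitors_ne_of_isBridge {M : Set V} [Fintype (G.neighborSet v)]
    (hM : IsMEGSet G M) (hbr : ∀ w, G.Adj v w → G.IsBridge s(v, w)) (hdeg : G.degree v ≠ 1)
    (h : Monitors G v u e) : ∃ b ∈ M, b ≠ v ∧ Monitors G b u e := by
  obtain ⟨q, hq⟩ := h.1.exists_walk_length_eq_dist
  have hq_nil : ¬ q.Nil := q.not_nil_of_ne h.ne
  have hdeg_two : 1 < G.degree v := by
    have : 0 < G.degree v := Finset.card_pos.mpr ⟨q.snd, by simpa using q.adj_snd hq_nil⟩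
    omega
  obtain ⟨w, hw, hw_snd⟩ := Finset.exists_mem_ne hdeg_two q.snd
  rw [mem_neighborFinset] at hw
  set H := G.deleteEdges {s(v, w)}
  have hvu : H.Reachable v u := reachable_deleteEdges_iff_exists_walk.mpr
    ⟨q, fun hmem => hw_snd ((q.isPath_of_length_eq_dist hq).eq_snd_of_mem_edges hmem)⟩
  obtain ⟨b, hbM, hbw⟩ : ∃ b ∈ M, H.Reachable b w := by
    obtain ⟨a, haM, c, hcM, hac⟩ := hM s(v, w) hw
    rcases hac.reachable_deleteEdges with haw | hcw
    exacts [⟨a, haM, haw⟩, ⟨c, hcM, hcw⟩]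
  have hbu : ¬ H.Reachable b u := fun hbu => hbr w hw (hvu.trans (hbu.symm.trans hbw))
  refine ⟨b, hbM, fun hbv => hbu (hbv ▸ hvu), h.of_forall_mem_support ?_ fun p => ?_⟩
  · exact (hbw.mono (deleteEdges_le _)).trans hw.symm.reachable
  · exact p.fst_mem_support_of_mem_edges (p.mem_edges_of_not_reachable_deleteEdges hbu)

lemma IsMEGSet.diff_singleton_of_isBridge {M : Set V} [Fintype (G.neighborSet v)]
    (hM : IsMEGSet G M) (hbr : ∀ w, G.Adj v w → G.IsBridge s(v, w)) (hdeg : G.degree v ≠ 1) :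
    IsMEGSet G (M \ {v}) := by
  intro e he
  obtain ⟨a, haM, c, hcM, hac⟩ := hM e he
  by_cases hav : a = v
  · subst hav
    obtain ⟨b, hbM, hba, hbc⟩ := hM.exists_monitors_ne_of_isBridge hbr hdeg hac
    exact ⟨b, ⟨hbM, hba⟩, c, ⟨hcM, hac.ne.symm⟩, hbc⟩
  by_cases hcv : c = v
  · subst hcv
    obtain ⟨b, hbM, hbc, hba⟩ := hM.exists_monitors_ne_of_isBridge hbr hdeg hac.symm
    exact ⟨a, ⟨haM, hav⟩, b, ⟨hbM, hbc⟩, hba.symm⟩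
  exact ⟨a, ⟨haM, hav⟩, c, ⟨hcM, hcv⟩, hac⟩

lemma meg_le_card [Fintype V] {M : Finset V} (hM : IsMEGSet G ↑M) : meg G ≤ M.card :=
  Nat.sInf_le ⟨M, hM, rfl⟩

end

theorem degree_one_or_not_mem_minimum_megSet_general {V : Type*} [Fintype V]
    (G : SimpleGraph V) [DecidableRel G.Adj]
    (S : Set V)
    (hbridge : ∀ e ∈ G.edgeSet, (∃ v ∈ S, v ∈ e) → G.IsBridge e) :
    ∀ v ∈ S, G.degree v = 1 ∨
      ∀ M : Finset V, IsMEGSet G ↑M → M.card = meg G → v ∉ M := by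
  classical
  intro v hvS
  refine or_iff_not_imp_left.mpr fun hdeg M hM hmin hvM => ?_
  have hbr : ∀ w, G.Adj v w → G.IsBridge s(v, w) :=
    fun w hw => hbridge _ hw ⟨v, hvS, Sym2.mem_mk_left v w⟩
  have herase : IsMEGSet G ↑(M.erase v) := by
    rw [Finset.coe_erase]
    exact hM.diff_singleton_of_isBridge hbr hdeg
  have := meg_le_card herase
  have := Finset.card_erase_lt_of_mem hvM
  omega

/-- if `H` (the subgraph of `G` induced by the vertex set `S`) is connected and
every edge of `G` incident to a vertex of `S` is a bridge of `G`, then every vertex of `S`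
either has degree 1 in `G` or belongs to no minimum MEG-set of `G`. -/
theorem degree_one_or_not_mem_minimum_megSet {V : Type*} [Fintype V]
    (G : SimpleGraph V) [DecidableRel G.Adj] (hG : G.Connected)
    (S : Set V) (hHconn : (G.induce S).Connected)
    (hbridge : ∀ e ∈ G.edgeSet, (∃ v ∈ S, v ∈ e) → G.IsBridge e) :
    ∀ v ∈ S, G.degree v = 1 ∨
      ∀ M : Finset V, IsMEGSet G ↑M → M.card = meg G → v ∉ M :=
  degree_one_or_not_mem_minimum_megSet_general G S hbridge
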